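/- Assume 0 < p, q < 1, 0 < p_s, p_s^e < 1, and 0 < p_α ≤ 1. Then the kernel K on {0,1}³ is primitive: there exists n ≥ 1 such that for all states s, s' ∈ {0,1}³, the n-step transition probability (Kⁿ)(s,s') is strictly positive (equivalently, the finite-state Markov chain with kernel K is irreducible and aperiodic). -/
import Mathlib


open Matrix

noncomputable section

/-- λ11 = p_α p_s p_s^e -/
def l11 (ps pse pa : ℝ) : ℝ := pa * ps * pse
/-- λ10 = p_α p_s (1 − p_s^e) -/
def l10 (ps pse pa : ℝ) : ℝ := pa * ps * (1 - pse)
/-- λ01 = p_α (1 − p_s) p_s^e -/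
def l01 (ps pse pa : ℝ) : ℝ := pa * (1 - ps) * pse
/-- λ00 = p_α (1 − p_s)(1 − p_s^e) + (1 − p_α) -/
def l00 (ps pse pa : ℝ) : ℝ := pa * (1 - ps) * (1 - pse) + (1 - pa)
/-- P_A = λ11 + λ10 -/
def PA (ps pse pa : ℝ) : ℝ := l11 ps pse pa + l10 ps pse pa
/-- P_B = λ11 + λ01 -/
def PB (ps pse pa : ℝ) : ℝ := l11 ps pse pa + l01 ps pse pa

/-- Source transition matrix Q. -/
def Qm (p q : ℝ) : Matrix (Fin 2) (Fin 2) ℝ := !![1 - p, p; q, 1 - q]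

/-- Stationary distribution of the source: v_0 = q/(p+q), v_1 = p/(p+q). -/
def vstat (p q : ℝ) : Fin 2 → ℝ := ![q / (p + q), p / (p + q)]

/-- T1(x,a,b) = δ(a,b) v_a λ11 [(I − λ00 Q)⁻¹]_{a,x} -/
def T1 (p q ps pse pa : ℝ) (x a b : Fin 2) : ℝ :=
  (if a = b then (1 : ℝ) else 0) * vstat p q a * l11 ps pse pa *
    ((1 - l00 ps pse pa • Qm p q)⁻¹ a x)

/-- T2(x,a,b) = v_b λ10 P_B [Q (I − (1−P_B) Q)⁻¹]_{b,a} [(I − λ00 Q)⁻¹]_{a,x} -/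
def T2 (p q ps pse pa : ℝ) (x a b : Fin 2) : ℝ :=
  vstat p q b * l10 ps pse pa * PB ps pse pa *
    ((Qm p q * (1 - (1 - PB ps pse pa) • Qm p q)⁻¹) b a) *
    ((1 - l00 ps pse pa • Qm p q)⁻¹ a x)

/-- T3(x,a,b) = v_a λ01 P_A [Q (I − (1−P_A) Q)⁻¹]_{a,b} [(I − λ00 Q)⁻¹]_{b,x} -/
def T3 (p q ps pse pa : ℝ) (x a b : Fin 2) : ℝ :=
  vstat p q a * l01 ps pse pa * PA ps pse pa *
    ((Qm p q * (1 - (1 - PA ps pse pa) • Qm p q)⁻¹) a b) *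
    ((1 - l00 ps pse pa • Qm p q)⁻¹ b x)

/-- π(x,a,b) = T1 + T2 + T3 -/
def piDist (p q ps pse pa : ℝ) (x a b : Fin 2) : ℝ :=
  T1 p q ps pse pa x a b + T2 p q ps pse pa x a b + T3 p q ps pse pa x a b
/-- Transition kernel K on {0,1}³ (represented as Fin 2 × Fin 2 × Fin 2). -/
def Kker (p q ps pse pa : ℝ) :
    Matrix (Fin 2 × Fin 2 × Fin 2) (Fin 2 × Fin 2 × Fin 2) ℝ :=
  fun s s' =>
    Qm p q s.1 s'.1 *
      (l11 ps pse pa * (if s'.2.1 = s'.1 ∧ s'.2.2 = s'.1 then (1 : ℝ) else 0) +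
       l10 ps pse pa * (if s'.2.1 = s'.1 ∧ s'.2.2 = s.2.2 then (1 : ℝ) else 0) +
       l01 ps pse pa * (if s'.2.1 = s.2.1 ∧ s'.2.2 = s'.1 then (1 : ℝ) else 0) +
       l00 ps pse pa * (if s'.2.1 = s.2.1 ∧ s'.2.2 = s.2.2 then (1 : ℝ) else 0))

/-- The kernel K is primitive: some power has all entries strictly positive. -/
theorem stmt10 (p q ps pse pa : ℝ)
    (hp0 : 0 < p) (hp1 : p < 1) (hq0 : 0 < q) (hq1 : q < 1)
    (hs0 : 0 < ps) (hs1 : ps < 1) (he0 : 0 < pse) (he1 : pse < 1)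
    (ha0 : 0 < pa) (ha1 : pa ≤ 1) :
    ∃ n : ℕ, 1 ≤ n ∧ ∀ s s' : Fin 2 × Fin 2 × Fin 2,
      0 < (Kker p q ps pse pa ^ n) s s' := by

  have hl10 : 0 < l10 ps pse pa := mul_pos (mul_pos ha0 hs0) (by linarith)
  have hl01 : 0 < l01 ps pse pa := mul_pos (mul_pos ha0 (by linarith)) he0
  have hl11 : 0 < l11 ps pse pa := mul_pos (mul_pos ha0 hs0) he0
  have hl00 : 0 < l00 ps pse pa := by
    have h1 : 0 < pa * (1 - ps) * (1 - pse) :=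
      mul_pos (mul_pos ha0 (by linarith)) (by linarith)
    unfold l00; linarith
  have hQ : ∀ i j : Fin 2, 0 < Qm p q i j := by
    intro i j
    fin_cases i <;> fin_cases j <;> simp [Qm] <;> linarith
  have hKnn : ∀ s t, 0 ≤ Kker p q ps pse pa s t := by
    intro s t
    refine mul_nonneg (hQ s.1 t.1).le ?_
    split_ifs <;> linarith [hl11.le, hl10.le, hl01.le, hl00.le]
  have hKpos10 : ∀ (s : Fin 2 × Fin 2 × Fin 2) (c : Fin 2),
      0 < Kker p q ps pse pa s (c, c, s.2.2) := by
    intro s c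
    show 0 < Qm p q s.1 c *
      (l11 ps pse pa * (if c = c ∧ s.2.2 = c then (1:ℝ) else 0) +
       l10 ps pse pa * (if c = c ∧ s.2.2 = s.2.2 then (1:ℝ) else 0) +
       l01 ps pse pa * (if c = s.2.1 ∧ s.2.2 = c then (1:ℝ) else 0) +
       l00 ps pse pa * (if c = s.2.1 ∧ s.2.2 = s.2.2 then (1:ℝ) else 0))
    refine mul_pos (hQ s.1 c) ?_
    rw [if_pos (⟨rfl, rfl⟩ : c = c ∧ s.2.2 = s.2.2)]
    split_ifs <;> linarith [hl11.le, hl01.le, hl00.le]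
  have hKpos01 : ∀ (s : Fin 2 × Fin 2 × Fin 2) (c : Fin 2),
      0 < Kker p q ps pse pa s (c, s.2.1, c) := by
    intro s c
    show 0 < Qm p q s.1 c *
      (l11 ps pse pa * (if s.2.1 = c ∧ c = c then (1:ℝ) else 0) +
       l10 ps pse pa * (if s.2.1 = c ∧ c = s.2.2 then (1:ℝ) else 0) +
       l01 ps pse pa * (if s.2.1 = s.2.1 ∧ c = c then (1:ℝ) else 0) +
       l00 ps pse pa * (if s.2.1 = s.2.1 ∧ c = s.2.2 then (1:ℝ) else 0))
    refine mul_pos (hQ s.1 c) ?_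
    rw [if_pos (⟨rfl, rfl⟩ : s.2.1 = s.2.1 ∧ c = c)]
    split_ifs <;> linarith [hl11.le, hl10.le, hl00.le]
  have hKpos00 : ∀ (s : Fin 2 × Fin 2 × Fin 2) (c : Fin 2),
      0 < Kker p q ps pse pa s (c, s.2.1, s.2.2) := by
    intro s c
    show 0 < Qm p q s.1 c *
      (l11 ps pse pa * (if s.2.1 = c ∧ s.2.2 = c then (1:ℝ) else 0) +
       l10 ps pse pa * (if s.2.1 = c ∧ s.2.2 = s.2.2 then (1:ℝ) else 0) +
       l01 ps pse pa * (if s.2.1 = s.2.1 ∧ s.2.2 = c then (1:ℝ) else 0) +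
       l00 ps pse pa * (if s.2.1 = s.2.1 ∧ s.2.2 = s.2.2 then (1:ℝ) else 0))
    refine mul_pos (hQ s.1 c) ?_
    rw [if_pos (⟨rfl, rfl⟩ : s.2.1 = s.2.1 ∧ s.2.2 = s.2.2)]
    split_ifs <;> linarith [hl11.le, hl10.le, hl01.le]
  refine ⟨3, by norm_num, ?_⟩
  intro s s'
  rw [pow_succ, pow_succ, pow_one, Matrix.mul_apply]
  refine Finset.sum_pos' (fun u _ => ?_) ⟨(s'.2.2, s'.2.1, s'.2.2), Finset.mem_univ _, ?_⟩
  · refine mul_nonneg ?_ (hKnn _ _)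
    rw [Matrix.mul_apply]
    exact Finset.sum_nonneg fun t _ => mul_nonneg (hKnn _ _) (hKnn _ _)
  · refine mul_pos ?_ ?_
    · rw [Matrix.mul_apply]
      refine Finset.sum_pos' (fun t _ => mul_nonneg (hKnn _ _) (hKnn _ _))
        ⟨(s'.2.1, s'.2.1, s.2.2), Finset.mem_univ _, ?_⟩
      exact mul_pos (hKpos10 s s'.2.1)
        (by simpa using hKpos01 (s'.2.1, s'.2.1, s.2.2) s'.2.2)
    · simpa using hKpos00 (s'.2.2, s'.2.1, s'.2.2) s'.1
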